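/- The multiplication operator M_ψ (given by M_ψ f = ψ f) is bounded on S^2 if and only if ψ ∈ S^2. -/

import Mathlib

open Metric Filter

noncomputable def taylorCoeff (f : ℂ → ℂ) (n : ℕ) : ℂ :=
  iteratedDeriv n f 0 / n.factorial

/-- Membership in `S²`: `f` is analytic on the open unit disk, equals its Taylor
series there, and its coefficients satisfy `Σ n² |a n|² < ∞`. -/
def MemS2 (f : ℂ → ℂ) : Prop :=
  AnalyticOn ℂ f (ball (0:ℂ) 1) ∧
  (∀ z ∈ ball (0:ℂ) 1, HasSum (fun n : ℕ => taylorCoeff f n * z ^ n) (f z)) ∧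
  Summable (fun n : ℕ => ((n : ℝ))^2 * ‖taylorCoeff f n‖^2)

/-- The square of the `S²` norm: `|a₀|² + Σ_{n≥1} n² |aₙ|²`. -/
noncomputable def s2NormSq (f : ℂ → ℂ) : ℝ :=
  ‖taylorCoeff f 0‖^2 + ∑' n : ℕ, ((n : ℝ) + 1)^2 * ‖taylorCoeff f (n+1)‖^2

noncomputable def s2Norm (f : ℂ → ℂ) : ℝ := Real.sqrt (s2NormSq f)

/-- The square of the `H²` norm, in terms of Taylor coefficients. -/
noncomputable def h2NormSq (f : ℂ → ℂ) : ℝ := ∑' n : ℕ, ‖taylorCoeff f n‖^2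

noncomputable def h2Norm (f : ℂ → ℂ) : ℝ := Real.sqrt (h2NormSq f)

/-- An operator on functions is bounded on `S²`. -/
def BoundedOpS2 (T : (ℂ → ℂ) → (ℂ → ℂ)) : Prop :=
  (∀ f, MemS2 f → MemS2 (T f)) ∧
  ∃ C : ℝ, ∀ f, MemS2 f → s2Norm (T f) ≤ C * s2Norm f

/-- The operator norm of an operator on `S²`. -/
noncomputable def opNormS2 (T : (ℂ → ℂ) → (ℂ → ℂ)) : ℝ :=
  sInf {C : ℝ | 0 ≤ C ∧ ∀ f, MemS2 f → s2Norm (T f) ≤ C * s2Norm f}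

/-- An (analytic) automorphism of the unit disk. -/
def IsDiskAut (φ : ℂ → ℂ) : Prop :=
  AnalyticOn ℂ φ (ball (0:ℂ) 1) ∧ Set.BijOn φ (ball (0:ℂ) 1) (ball (0:ℂ) 1)

/-!
Testing on `f = 1` gives `ψ ∈ S²`. Conversely, Cauchy–Schwarz against `∑ 1 / n² = π² / 6` shows
that the Taylor coefficients of an `S²` function are absolutely summable, with `ℓ¹` norm controlled
by the `S²` norm. Writing `n (ψ f)ₙ = ∑_{i + j = n} (i ψᵢ) fⱼ + ψᵢ (j fⱼ)`, Young's inequality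
`‖x ⋆ y‖₂ ≤ ‖x‖₂ ‖y‖₁` then gives `‖ψ f‖_{S²} ≤ √13 ‖ψ‖_{S²} ‖f‖_{S²}`.
-/

open Finset Real

theorem summable_mul_and_tsum_mul_le_sqrt_mul_sqrt {ι : Type*} {f g : ι → ℝ}
    (hf : ∀ i, 0 ≤ f i) (hg : ∀ i, 0 ≤ g i)
    (hf2 : Summable fun i => f i ^ 2) (hg2 : Summable fun i => g i ^ 2) :
    Summable (fun i => f i * g i) ∧
      ∑' i, f i * g i ≤ √(∑' i, f i ^ 2) * √(∑' i, g i ^ 2) := by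
  have h := summable_and_inner_le_Lp_mul_Lq_tsum_of_nonneg HolderConjugate.two_two hf hg
    (by simpa only [rpow_two] using hf2) (by simpa only [rpow_two] using hg2)
  simpa only [rpow_two, sqrt_eq_rpow, one_div] using h

theorem sum_antidiagonal_snd_le_tsum {y : ℕ → ℝ} (hy : ∀ n, 0 ≤ y n) (hy1 : Summable y) (n : ℕ) :
    ∑ p ∈ antidiagonal n, y p.2 ≤ ∑' k, y k := by
  rw [← Nat.sum_antidiagonal_swap]
  simp only [Prod.snd_swap]
  rw [Nat.sum_antidiagonal_eq_sum_range_succ (fun i _ => y i)]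
  exact hy1.sum_le_tsum _ fun k _ => hy k

theorem summable_and_tsum_sq_sum_antidiagonal_le {x y : ℕ → ℝ} (hy : ∀ n, 0 ≤ y n)
    (hx2 : Summable fun n => x n ^ 2) (hy1 : Summable y) :
    Summable (fun n => (∑ p ∈ antidiagonal n, x p.1 * y p.2) ^ 2) ∧
      ∑' n, (∑ p ∈ antidiagonal n, x p.1 * y p.2) ^ 2 ≤ (∑' n, x n ^ 2) * (∑' n, y n) ^ 2 := by
  set S := ∑' n, y n
  have hprod : Summable fun p : ℕ × ℕ => x p.1 ^ 2 * y p.2 :=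
    hx2.mul_of_nonneg hy1 (fun n => sq_nonneg _) hy
  have hconv :=
    summable_sum_mul_antidiagonal_of_summable_mul (f := fun n => x n ^ 2) (g := y) hprod
  -- Cauchy–Schwarz with weights `y p.2` on each antidiagonal
  have hpoint : ∀ n, (∑ p ∈ antidiagonal n, x p.1 * y p.2) ^ 2 ≤
      S * ∑ p ∈ antidiagonal n, x p.1 ^ 2 * y p.2 := fun n =>
    (sum_sq_le_sum_mul_sum_of_sq_le_mul _ (r := fun p => x p.1 * y p.2) (fun p _ => hy p.2)
      (fun p _ => mul_nonneg (sq_nonneg (x p.1)) (hy p.2)) fun p _ => le_of_eq (by ring)).trans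
      (mul_le_mul_of_nonneg_right (sum_antidiagonal_snd_le_tsum hy hy1 n)
        (sum_nonneg fun p _ => mul_nonneg (sq_nonneg _) (hy p.2)))
  have hsum := (hconv.mul_left S).of_nonneg_of_le (fun n => sq_nonneg _) hpoint
  refine ⟨hsum, ?_⟩
  calc ∑' n, (∑ p ∈ antidiagonal n, x p.1 * y p.2) ^ 2
      ≤ S * ∑' n, ∑ p ∈ antidiagonal n, x p.1 ^ 2 * y p.2 := by
        rw [← tsum_mul_left]; exact hsum.tsum_le_tsum hpoint (hconv.mul_left S)
    _ = (∑' n, x n ^ 2) * S ^ 2 := by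
        rw [← hx2.tsum_mul_tsum_eq_tsum_sum_antidiagonal hy1 hprod]; ring

theorem summable_and_sq_tsum_le_of_summable_natCast_sq_mul_sq {u : ℕ → ℝ} (hu : ∀ n, 0 ≤ u n)
    (h : Summable fun n : ℕ => (n : ℝ) ^ 2 * u n ^ 2) :
    Summable u ∧ (∑' n, u n) ^ 2 ≤ 3 * (u 0 ^ 2 + ∑' n : ℕ, (n : ℝ) ^ 2 * u n ^ 2) := by
  have hinv : HasSum (fun n : ℕ => (n : ℝ)⁻¹ ^ 2) (π ^ 2 / 6) := by
    simpa [inv_pow] using hasSum_zeta_two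
  obtain ⟨hsum, hcs⟩ := summable_mul_and_tsum_mul_le_sqrt_mul_sqrt (f := fun n : ℕ => (n : ℝ)⁻¹)
    (g := fun n : ℕ => n * u n) (fun n => by positivity) (fun n => mul_nonneg n.cast_nonneg (hu n))
    hinv.summable (by simpa [mul_pow] using h)
  have hsplit : u = fun n : ℕ => (if n = 0 then u 0 else 0) + (n : ℝ)⁻¹ * (n * u n) := by
    ext n; rcases eq_or_ne n 0 with rfl | hn
    · simp
    · simp [hn]
  have hone : HasSum (fun n : ℕ => if n = 0 then u 0 else 0) (u 0) := hasSum_ite_eq 0 (u 0)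
  refine ⟨hsplit ▸ hone.summable.add hsum, ?_⟩
  set N := ∑' n : ℕ, (n : ℝ) ^ 2 * u n ^ 2
  have hbound : ∑' n, u n ≤ u 0 + √(π ^ 2 / 6) * √N := by
    have htsum : ∑' n, u n = u 0 + ∑' n : ℕ, (n : ℝ)⁻¹ * (n * u n) := by
      nth_rw 1 [hsplit]; exact (hone.add hsum.hasSum).tsum_eq
    simp only [hinv.tsum_eq, mul_pow] at hcs
    linarith
  have hN : 0 ≤ N := tsum_nonneg fun n => by positivity
  have hπ : π ^ 2 / 6 ≤ 2 := by nlinarith [pi_lt_d2, pi_pos]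
  have hs := sq_sqrt (show 0 ≤ π ^ 2 / 6 by positivity)
  have ht := sq_sqrt hN
  -- Cauchy–Schwarz in `ℝ²`: `(u₀ + s t)² ≤ (1 + s²)(u₀² + t²)`
  calc (∑' n, u n) ^ 2 ≤ (u 0 + √(π ^ 2 / 6) * √N) ^ 2 :=
        pow_le_pow_left₀ (tsum_nonneg hu) hbound 2
    _ ≤ (1 + π ^ 2 / 6) * (u 0 ^ 2 + N) := by
        nlinarith [sq_nonneg (√(π ^ 2 / 6) * u 0 - √N)]
    _ ≤ 3 * (u 0 ^ 2 + N) := by gcongr; linarith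

section CauchyProduct

variable {R : Type*} [SeminormedRing R]

theorem natCast_mul_norm_sum_antidiagonal_le (a b : ℕ → R) (n : ℕ) :
    n * ‖∑ p ∈ antidiagonal n, a p.1 * b p.2‖ ≤
      ∑ p ∈ antidiagonal n, p.1 * ‖a p.1‖ * ‖b p.2‖ +
        ∑ p ∈ antidiagonal n, p.1 * ‖b p.1‖ * ‖a p.2‖ := by
  rw [← Nat.sum_antidiagonal_swap (f := fun p => p.1 * ‖b p.1‖ * ‖a p.2‖), ← sum_add_distrib]
  calc (n : ℝ) * ‖∑ p ∈ antidiagonal n, a p.1 * b p.2‖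
      ≤ n * ∑ p ∈ antidiagonal n, ‖a p.1‖ * ‖b p.2‖ := by
        gcongr; exact (norm_sum_le _ _).trans (sum_le_sum fun p _ => norm_mul_le _ _)
    _ = _ := by
        rw [mul_sum]
        refine sum_congr rfl fun p hp => ?_
        rw [← mem_antidiagonal.mp hp]
        push_cast
        simp only [Prod.fst_swap, Prod.snd_swap]
        ring

theorem summable_and_tsum_natCast_sq_mul_norm_sq_antidiagonal_le {a b : ℕ → R}
    (ha : Summable fun n : ℕ => (n : ℝ) ^ 2 * ‖a n‖ ^ 2)
    (hb : Summable fun n : ℕ => (n : ℝ) ^ 2 * ‖b n‖ ^ 2)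
    (ha1 : Summable fun n => ‖a n‖) (hb1 : Summable fun n => ‖b n‖) :
    Summable (fun n : ℕ => (n : ℝ) ^ 2 * ‖∑ p ∈ antidiagonal n, a p.1 * b p.2‖ ^ 2) ∧
      ∑' n : ℕ, (n : ℝ) ^ 2 * ‖∑ p ∈ antidiagonal n, a p.1 * b p.2‖ ^ 2 ≤
        2 * (∑' n : ℕ, (n : ℝ) ^ 2 * ‖a n‖ ^ 2) * (∑' n, ‖b n‖) ^ 2 +
          2 * (∑' n : ℕ, (n : ℝ) ^ 2 * ‖b n‖ ^ 2) * (∑' n, ‖a n‖) ^ 2 := by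
  have hsq {c : ℕ → R} (hc : Summable fun n : ℕ => (n : ℝ) ^ 2 * ‖c n‖ ^ 2) :
      Summable fun n : ℕ => ((n : ℝ) * ‖c n‖) ^ 2 := by simpa only [mul_pow] using hc
  obtain ⟨hP, hPle⟩ :=
    summable_and_tsum_sq_sum_antidiagonal_le (fun n => norm_nonneg (b n)) (hsq ha) hb1
  obtain ⟨hQ, hQle⟩ :=
    summable_and_tsum_sq_sum_antidiagonal_le (fun n => norm_nonneg (a n)) (hsq hb) ha1
  have hpoint : ∀ n : ℕ, (n : ℝ) ^ 2 * ‖∑ p ∈ antidiagonal n, a p.1 * b p.2‖ ^ 2 ≤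
      2 * (∑ p ∈ antidiagonal n, p.1 * ‖a p.1‖ * ‖b p.2‖) ^ 2 +
        2 * (∑ p ∈ antidiagonal n, p.1 * ‖b p.1‖ * ‖a p.2‖) ^ 2 := by
    intro n
    have h := natCast_mul_norm_sum_antidiagonal_le a b n
    have h0 : 0 ≤ (n : ℝ) * ‖∑ p ∈ antidiagonal n, a p.1 * b p.2‖ := by positivity
    nlinarith [sq_nonneg ((∑ p ∈ antidiagonal n, p.1 * ‖a p.1‖ * ‖b p.2‖) -
      ∑ p ∈ antidiagonal n, p.1 * ‖b p.1‖ * ‖a p.2‖)]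
  have hPQ := (hP.mul_left 2).add (hQ.mul_left 2)
  have hsum := hPQ.of_nonneg_of_le (fun n => by positivity) hpoint
  refine ⟨hsum, (hsum.tsum_le_tsum hpoint hPQ).trans ?_⟩
  rw [(hP.mul_left 2).tsum_add (hQ.mul_left 2), tsum_mul_left, tsum_mul_left]
  simp only [mul_pow] at hPle hQle
  linarith

end CauchyProduct

theorem taylorCoeff_mul {f g : ℂ → ℂ} {n : ℕ} (hf : ContDiffAt ℂ n f 0) (hg : ContDiffAt ℂ n g 0) :
    taylorCoeff (f * g) n = ∑ p ∈ antidiagonal n, taylorCoeff f p.1 * taylorCoeff g p.2 := by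
  have h := iteratedDerivWithin_mul (Set.mem_univ 0) uniqueDiffOn_univ hf.contDiffWithinAt
    hg.contDiffWithinAt
  simp only [iteratedDerivWithin_univ] at h
  rw [taylorCoeff, h, Nat.sum_antidiagonal_eq_sum_range_succ
    (fun i j => taylorCoeff f i * taylorCoeff g j), sum_div]
  refine sum_congr rfl fun k hk => ?_
  have hn : (n.factorial : ℂ) ≠ 0 := Nat.cast_ne_zero.mpr n.factorial_ne_zero
  rw [Nat.cast_choose ℂ (mem_range_succ_iff.mp hk), taylorCoeff, taylorCoeff]
  field_simp

theorem hasSum_taylorCoeff_mul_pow {f : ℂ → ℂ} {r : ℝ} (hf : DifferentiableOn ℂ f (ball 0 r))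
    {z : ℂ} (hz : z ∈ ball 0 r) : HasSum (fun n => taylorCoeff f n * z ^ n) (f z) := by
  have h := Complex.hasSum_taylorSeries_on_ball hf hz
  simp only [sub_zero, smul_eq_mul] at h
  refine h.congr_fun fun n => ?_
  rw [taylorCoeff, div_eq_inv_mul]
  ring

theorem memS2_of_analyticOn {f : ℂ → ℂ} (hf : AnalyticOn ℂ f (ball 0 1))
    (h : Summable fun n : ℕ => (n : ℝ) ^ 2 * ‖taylorCoeff f n‖ ^ 2) : MemS2 f :=
  ⟨hf, fun _ hz => hasSum_taylorCoeff_mul_pow hf.differentiableOn hz, h⟩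

theorem memS2_const (c : ℂ) : MemS2 fun _ => c :=
  memS2_of_analyticOn analyticOn_const <| summable_zero.congr fun n => by
    rcases n with _ | n <;> simp [taylorCoeff, iteratedDeriv_const]

theorem s2NormSq_eq {f : ℂ → ℂ} (hf : Summable fun n : ℕ => (n : ℝ) ^ 2 * ‖taylorCoeff f n‖ ^ 2) :
    s2NormSq f = ‖taylorCoeff f 0‖ ^ 2 + ∑' n : ℕ, (n : ℝ) ^ 2 * ‖taylorCoeff f n‖ ^ 2 := by
  rw [s2NormSq, hf.tsum_eq_zero_add]
  push_cast
  simp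

theorem MemS2.summable_norm_and_sq_tsum_le {f : ℂ → ℂ} (hf : MemS2 f) :
    Summable (fun n => ‖taylorCoeff f n‖) ∧ (∑' n, ‖taylorCoeff f n‖) ^ 2 ≤ 3 * s2NormSq f := by
  rw [s2NormSq_eq hf.2.2]
  exact summable_and_sq_tsum_le_of_summable_natCast_sq_mul_sq (fun n => norm_nonneg _) hf.2.2

theorem taylorCoeff_mul_of_analyticOn {ψ f : ℂ → ℂ} (hψ : AnalyticOn ℂ ψ (ball 0 1))
    (hf : AnalyticOn ℂ f (ball 0 1)) (n : ℕ) :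
    taylorCoeff (ψ * f) n = ∑ p ∈ antidiagonal n, taylorCoeff ψ p.1 * taylorCoeff f p.2 :=
  taylorCoeff_mul (hψ.analyticAt (ball_mem_nhds 0 one_pos)).contDiffAt
    (hf.analyticAt (ball_mem_nhds 0 one_pos)).contDiffAt

theorem MemS2.mul_and_s2NormSq_mul_le {ψ f : ℂ → ℂ} (hψ : MemS2 ψ) (hf : MemS2 f) :
    MemS2 (ψ * f) ∧ s2NormSq (ψ * f) ≤ 13 * s2NormSq ψ * s2NormSq f := by
  obtain ⟨hψ1, hLψ⟩ := hψ.summable_norm_and_sq_tsum_le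
  obtain ⟨hf1, hLf⟩ := hf.summable_norm_and_sq_tsum_le
  obtain ⟨hψa, -, hψs⟩ := hψ
  obtain ⟨hfa, -, hfs⟩ := hf
  have hc := taylorCoeff_mul_of_analyticOn hψa hfa
  obtain ⟨hsum, hbound⟩ :=
    summable_and_tsum_natCast_sq_mul_norm_sq_antidiagonal_le hψs hfs hψ1 hf1
  simp only [← hc] at hsum hbound
  refine ⟨memS2_of_analyticOn (hψa.mul hfa) hsum, ?_⟩
  have hc0 : ‖taylorCoeff (ψ * f) 0‖ ^ 2 = ‖taylorCoeff ψ 0‖ ^ 2 * ‖taylorCoeff f 0‖ ^ 2 := by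
    simp [hc, mul_pow]
  rw [s2NormSq_eq hsum, hc0]
  rw [s2NormSq_eq hψs] at hLψ ⊢
  rw [s2NormSq_eq hfs] at hLf ⊢
  have hNψ : 0 ≤ ∑' n : ℕ, (n : ℝ) ^ 2 * ‖taylorCoeff ψ n‖ ^ 2 :=
    tsum_nonneg fun n => by positivity
  have hNf : 0 ≤ ∑' n : ℕ, (n : ℝ) ^ 2 * ‖taylorCoeff f n‖ ^ 2 :=
    tsum_nonneg fun n => by positivity
  -- `13 = 1 + 2 · 3 + 2 · 3`, from `c₀ = ψ₀ f₀` and the two Young terms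
  nlinarith [mul_le_mul_of_nonneg_left hLf hNψ, mul_le_mul_of_nonneg_left hLψ hNf,
    mul_nonneg (sq_nonneg ‖taylorCoeff ψ 0‖) (sq_nonneg ‖taylorCoeff f 0‖),
    mul_nonneg hNψ hNf, mul_nonneg hNψ (sq_nonneg ‖taylorCoeff f 0‖),
    mul_nonneg hNf (sq_nonneg ‖taylorCoeff ψ 0‖)]

theorem s2NormSq_nonneg (f : ℂ → ℂ) : 0 ≤ s2NormSq f :=
  add_nonneg (sq_nonneg _) (tsum_nonneg fun n => by positivity)

theorem MemS2.s2Norm_mul_le {ψ f : ℂ → ℂ} (hψ : MemS2 ψ) (hf : MemS2 f) :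
    s2Norm (ψ * f) ≤ √13 * s2Norm ψ * s2Norm f := by
  rw [s2Norm, s2Norm, s2Norm, ← sqrt_mul (by norm_num),
    ← sqrt_mul (mul_nonneg (by norm_num) (s2NormSq_nonneg ψ))]
  exact sqrt_le_sqrt (hψ.mul_and_s2NormSq_mul_le hf).2

theorem multiplication_bounded_iff_general (ψ : ℂ → ℂ) :
    BoundedOpS2 (fun f => fun z => ψ z * f z) ↔ MemS2 ψ := by
  constructor
  · intro h
    simpa using h.1 _ (memS2_const 1)
  · intro hψ
    exact ⟨fun f hf => (hψ.mul_and_s2NormSq_mul_le hf).1, √13 * s2Norm ψ,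
      fun f hf => hψ.s2Norm_mul_le hf⟩

theorem multiplication_bounded_iff (ψ : ℂ → ℂ) (hψ : AnalyticOn ℂ ψ (ball (0:ℂ) 1)) :
    BoundedOpS2 (fun f => fun z => ψ z * f z) ↔ MemS2 ψ :=
  multiplication_bounded_iff_general ψ
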